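/- Let (G, M, I) be a finite formal context and let X ⊆ M be a key. Then the closure map Y ↦ Y'' is injective on the powerset of X: for any two distinct subsets Y₁, Y₂ ⊆ X one has Y₁'' ≠ Y₂''. Consequently, the context (G, M, I) has at least 2^{|X|} distinct closed itemsets. -/
import Mathlib


/-- The extent `B'` of an itemset: objects having all attributes of `B`. -/
abbrev extentOf {G M : Type*} [Fintype G] (I : G → M → Prop) [∀ g m, Decidable (I g m)]
    (B : Finset M) : Finset G :=
  Finset.univ.filter fun g => ∀ m ∈ B, I g m

/-- The intent `A'` of a set of objects: attributes shared by all objects of `A`. -/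
abbrev intentOf {G M : Type*} [Fintype M] (I : G → M → Prop) [∀ g m, Decidable (I g m)]
    (A : Finset G) : Finset M :=
  Finset.univ.filter fun m => ∀ g ∈ A, I g m

/-- The closure `B''` of an itemset. -/
abbrev closureOf {G M : Type*} [Fintype G] [Fintype M] (I : G → M → Prop) [∀ g m, Decidable (I g m)]
    (B : Finset M) : Finset M :=
  intentOf I (extentOf I B)

/-- An itemset is closed when `B'' = B`. -/
abbrev isClosedItemset {G M : Type*} [Fintype G] [Fintype M] (I : G → M → Prop) [∀ g m, Decidable (I g m)]
    (B : Finset M) : Prop :=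
  closureOf I B = B

/-- A key: every proper subset has a different extent. -/
abbrev isKey {G M : Type*} [Fintype G] (I : G → M → Prop) [∀ g m, Decidable (I g m)]
    (X : Finset M) : Prop :=
  ∀ Y : Finset M, Y ⊂ X → extentOf I Y ≠ extentOf I X

/-- A passkey: a key of minimum cardinality among the keys of the same closed itemset. -/
abbrev isPasskey {G M : Type*} [Fintype G] [Fintype M] (I : G → M → Prop) [∀ g m, Decidable (I g m)]
    (X : Finset M) : Prop :=
  isKey I X ∧ ∀ Z : Finset M, isKey I Z → closureOf I Z = closureOf I X → X.card ≤ Z.card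

/-- The closure level `C_k`: closed itemsets having a passkey of cardinality `k`. -/
abbrev closureLevel {G M : Type*} [Fintype G] [Fintype M] (I : G → M → Prop) [∀ g m, Decidable (I g m)]
    (k : ℕ) : Set (Finset M) :=
  {B | isClosedItemset I B ∧ ∃ X : Finset M, isPasskey I X ∧ closureOf I X = B ∧ X.card = k}


set_option linter.unusedSectionVars false
section Aux
variable {G M : Type*} [Fintype G] [Fintype M] (I : G → M → Prop) [∀ g m, Decidable (I g m)]

lemma mem_extent_iff (B : Finset M) (g : G) :
    g ∈ extentOf I B ↔ ∀ m ∈ B, I g m := by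
  simp [extentOf]

lemma mem_intent_iff (A : Finset G) (m : M) :
    m ∈ intentOf I A ↔ ∀ g ∈ A, I g m := by
  simp [intentOf]

lemma my_subset_closure (B : Finset M) : B ⊆ closureOf I B := by
  intro m hm
  rw [mem_intent_iff]
  intro g hg
  exact (mem_extent_iff I B g).1 hg m hm

lemma extent_closure (B : Finset M) :
    extentOf I (closureOf I B) = extentOf I B := by
  ext g
  rw [mem_extent_iff, mem_extent_iff]
  constructor
  · intro h m hm
    exact h m (my_subset_closure I B hm)
  · intro h m hm
    exact (mem_intent_iff I _ m).1 hm g ((mem_extent_iff I B g).2 h)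

lemma closure_isClosed (B : Finset M) : isClosedItemset I (closureOf I B) := by
  unfold isClosedItemset closureOf
  rw [extent_closure I B]

lemma key_extent_injOn [DecidableEq M] (X : Finset M) (hX : isKey I X) :
    ∀ Y₁ Y₂ : Finset M, Y₁ ⊆ X → Y₂ ⊆ X → extentOf I Y₁ = extentOf I Y₂ → Y₁ = Y₂ := by
  have main : ∀ Y₁ Y₂ : Finset M, Y₁ ⊆ X → Y₂ ⊆ X →
      extentOf I Y₁ = extentOf I Y₂ → Y₂ ⊆ Y₁ := by
    intro Y₁ Y₂ h1 h2 he m hm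
    by_contra hmY
    have hZ : X \ {m} ⊂ X := by
      apply Finset.ssubset_iff_of_subset (Finset.sdiff_subset) |>.2
      exact ⟨m, h2 hm, by simp⟩
    apply hX _ hZ
    ext g
    rw [mem_extent_iff, mem_extent_iff]
    constructor
    · intro h
      intro a ha
      by_cases ham : a = m
      · subst ham
        have hg1 : g ∈ extentOf I Y₁ := by
          rw [mem_extent_iff]
          intro b hb
          exact h b (Finset.mem_sdiff.2 ⟨h1 hb, by simp; rintro rfl; exact hmY hb⟩)
        rw [he, mem_extent_iff] at hg1
        exact hg1 a hm
      · exact h a (Finset.mem_sdiff.2 ⟨ha, by simp [ham]⟩)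
    · intro h a ha
      exact h a (Finset.mem_sdiff.1 ha).1
  intro Y₁ Y₂ h1 h2 he
  exact Finset.Subset.antisymm (main Y₂ Y₁ h2 h1 he.symm) (main Y₁ Y₂ h1 h2 he)

end Aux

/-- If `X` is a key then the closure map is injective on the powerset of `X`;
consequently there are at least `2 ^ |X|` closed itemsets. -/
theorem key_closure_injective_on_powerset {G M : Type*} [Fintype G] [Fintype M]
    (I : G → M → Prop) [∀ g m, Decidable (I g m)]
    (X : Finset M) (hX : isKey I X) :
    (∀ Y₁ Y₂ : Finset M, Y₁ ⊆ X → Y₂ ⊆ X → Y₁ ≠ Y₂ →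
      closureOf I Y₁ ≠ closureOf I Y₂) ∧
    2 ^ X.card ≤ {B : Finset M | isClosedItemset I B}.ncard := by
  classical
  have hinj : ∀ Y₁ Y₂ : Finset M, Y₁ ⊆ X → Y₂ ⊆ X → Y₁ ≠ Y₂ →
      closureOf I Y₁ ≠ closureOf I Y₂ := by
    intro Y₁ Y₂ h1 h2 hne hc
    apply hne
    apply key_extent_injOn I X hX Y₁ Y₂ h1 h2
    have := congrArg (extentOf I) hc
    rwa [extent_closure, extent_closure] at this
  refine ⟨hinj, ?_⟩
  have himg : ↑(X.powerset.image (closureOf I)) ⊆ {B : Finset M | isClosedItemset I B} := by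
    intro B hB
    simp only [Finset.coe_image, Set.mem_image, Finset.mem_coe, Finset.mem_powerset] at hB
    obtain ⟨Y, _, rfl⟩ := hB
    exact closure_isClosed I Y
  have hcard : (X.powerset.image (closureOf I)).card = 2 ^ X.card := by
    rw [Finset.card_image_of_injOn, Finset.card_powerset]
    intro Y₁ h1 Y₂ h2 hc
    by_contra hne
    exact hinj Y₁ Y₂ (Finset.mem_powerset.1 h1) (Finset.mem_powerset.1 h2) hne hc
  calc 2 ^ X.card = (↑(X.powerset.image (closureOf I)) : Set (Finset M)).ncard := by
        rw [Set.ncard_coe_finset, hcard]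
    _ ≤ _ := Set.ncard_le_ncard himg (Set.toFinite _)
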